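/- Suppose F admits a tight completion by r vectors with squared norms a_1,...,a_r for some r < n (n = dim H). Then F does not admit a tight completion by k vectors with squared norms a_1,...,a_k for any k < n with k ≠ r. -/

import Mathlib

open scoped BigOperators

noncomputable def frameOp {n p : ℕ} (f : Fin p → EuclideanSpace ℂ (Fin n)) :
    EuclideanSpace ℂ (Fin n) →L[ℂ] EuclideanSpace ℂ (Fin n) :=
  ∑ i, (innerSL ℂ (f i)).smulRight (f i)

def HasEigenvalues {n : ℕ} (S : EuclideanSpace ℂ (Fin n) →L[ℂ] EuclideanSpace ℂ (Fin n))
    (Λ : Fin n → ℝ) : Prop :=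
  Antitone Λ ∧ ∃ e : OrthonormalBasis (Fin n) ℂ (EuclideanSpace ℂ (Fin n)),
    ∀ i, S (e i) = (Λ i : ℂ) • e i

noncomputable def tailSum {n : ℕ} (hn : 0 < n) (Λ : Fin n → ℝ) (k : ℕ) : ℝ :=
  ∑ i ∈ Finset.range k, Λ ⟨n - 1 - i, by omega⟩

def Completable {n p : ℕ} (f : Fin p → EuclideanSpace ℂ (Fin n)) (a : ℕ → ℝ) (r : ℕ) : Prop :=
  ∃ (c : ℝ) (g : Fin r → EuclideanSpace ℂ (Fin n)), 0 < c ∧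
    (∀ i : Fin r, ‖g i‖ ^ 2 = a (i : ℕ)) ∧
    frameOp f + frameOp g = (c : ℂ) • ContinuousLinearMap.id ℂ (EuclideanSpace ℂ (Fin n))

noncomputable def cseq {n : ℕ} (hn : 0 < n) (Λ : Fin n → ℝ) (a : ℕ → ℝ) : ℕ → ℝ
  | 0 => Λ ⟨0, hn⟩
  | k + 1 => max (cseq hn Λ a k)
      ((1 / (k + 1 : ℝ)) * (∑ i ∈ Finset.range (k + 1), a i + tailSum hn Λ (k + 1)))

def IsBessel {n : ℕ} (g : ℕ → EuclideanSpace ℂ (Fin n)) : Prop :=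
  ∃ b > 0, ∀ x : EuclideanSpace ℂ (Fin n),
    Summable (fun i => ‖(inner ℂ (g i) x : ℂ)‖ ^ 2) ∧
    ∑' i, ‖(inner ℂ (g i) x : ℂ)‖ ^ 2 ≤ b * ‖x‖ ^ 2

def CompletableInf {n p : ℕ} (f : Fin p → EuclideanSpace ℂ (Fin n)) (a : ℕ → ℝ) : Prop :=
  ∃ (c : ℝ) (g : ℕ → EuclideanSpace ℂ (Fin n)), 0 < c ∧ IsBessel g ∧
    (∀ i, ‖g i‖ ^ 2 = a i) ∧
    ∀ x, frameOp f x + ∑' i, (inner ℂ (g i) x : ℂ) • g i = (c : ℂ) • x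

/-!
If `S_F + S_G = c • 1` with fewer than `n` vectors `g i`, then `S_G` has a nonzero kernel vector
`x`, and `S_F x = c • x`. For any other tight completion `S_F + S_H = c' • 1`, positivity of `S_H`
at `x` gives `c ≤ c'`. So two completions by fewer than `n` vectors share the constant, hence
`S_G = S_H`, and comparing traces gives `∑ i < r, a i = ∑ i < k, a i`, which forces `k = r`
because the `a i` are positive.
-/

open InnerProductSpace

section FrameOperator

variable {n p : ℕ}

lemma frameOp_eq_sum_rankOne (f : Fin p → EuclideanSpace ℂ (Fin n)) :
    frameOp f = ∑ i, rankOne ℂ (f i) (f i) :=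
  rfl

lemma frameOp_apply (f : Fin p → EuclideanSpace ℂ (Fin n)) (x : EuclideanSpace ℂ (Fin n)) :
    frameOp f x = ∑ i, inner ℂ (f i) x • f i := by
  simp [frameOp_eq_sum_rankOne]

lemma isPositive_frameOp (f : Fin p → EuclideanSpace ℂ (Fin n)) : (frameOp f).IsPositive := by
  rw [frameOp_eq_sum_rankOne]
  exact ContinuousLinearMap.isPositive_sum _ fun i _ => isPositive_rankOne_self (f i)

lemma trace_frameOp (f : Fin p → EuclideanSpace ℂ (Fin n)) :
    LinearMap.trace ℂ _ (frameOp f).toLinearMap = ∑ i, (‖f i‖ ^ 2 : ℝ) := by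
  simp [frameOp_eq_sum_rankOne, trace_rankOne, inner_self_eq_norm_sq_to_K]

lemma exists_ne_zero_frameOp_eq_zero {r : ℕ} (hr : r < n) (g : Fin r → EuclideanSpace ℂ (Fin n)) :
    ∃ x, x ≠ 0 ∧ frameOp g x = 0 := by
  let coeffs : EuclideanSpace ℂ (Fin n) →ₗ[ℂ] (Fin r → ℂ) :=
    LinearMap.pi fun i => (innerSL ℂ (g i)).toLinearMap
  have hker : LinearMap.ker coeffs ≠ ⊥ :=
    LinearMap.ker_ne_bot_of_finrank_lt (by simpa using hr)
  obtain ⟨x, hx, hx0⟩ := Submodule.exists_mem_ne_zero_of_ne_bot hker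
  refine ⟨x, hx0, ?_⟩
  have hcoeffs : ∀ i, inner ℂ (g i) x = 0 := fun i => congrFun hx i
  simp [frameOp_apply, hcoeffs]

end FrameOperator

section TightCompletion

variable {n p r k : ℕ} {f : Fin p → EuclideanSpace ℂ (Fin n)}

lemma tight_const_le_of_lt_dim (hr : r < n) {g : Fin r → EuclideanSpace ℂ (Fin n)}
    {h : Fin k → EuclideanSpace ℂ (Fin n)} {c c' : ℝ}
    (hg : frameOp f + frameOp g = (c : ℂ) • ContinuousLinearMap.id ℂ _)
    (hh : frameOp f + frameOp h = (c' : ℂ) • ContinuousLinearMap.id ℂ _) :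
    c ≤ c' := by
  obtain ⟨x, hx0, hgx⟩ := exists_ne_zero_frameOp_eq_zero hr g
  have hfx : frameOp f x = (c : ℂ) • x := by
    simpa [hgx] using congrArg (· x) hg
  have hhx : frameOp h x = ((c' - c : ℝ) : ℂ) • x := by
    have := congrArg (· x) hh
    simp only [FunLike.coe_add, FunLike.coe_smul, Pi.add_apply, Pi.smul_apply,
      ContinuousLinearMap.id_apply, hfx] at this
    rw [Complex.ofReal_sub, sub_smul, ← this, add_sub_cancel_left]
  have hnonneg := (isPositive_frameOp h).re_inner_nonneg_left x
  rw [hhx, inner_smul_left, Complex.conj_ofReal, RCLike.re_to_complex, Complex.re_ofReal_mul,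
    ← RCLike.re_to_complex, inner_self_eq_norm_sq] at hnonneg
  have hx : 0 < ‖x‖ ^ 2 := by positivity
  nlinarith

lemma tight_const_eq_of_lt_dim (hr : r < n) (hk : k < n) {g : Fin r → EuclideanSpace ℂ (Fin n)}
    {h : Fin k → EuclideanSpace ℂ (Fin n)} {c c' : ℝ}
    (hg : frameOp f + frameOp g = (c : ℂ) • ContinuousLinearMap.id ℂ _)
    (hh : frameOp f + frameOp h = (c' : ℂ) • ContinuousLinearMap.id ℂ _) :
    c = c' :=
  le_antisymm (tight_const_le_of_lt_dim hr hg hh) (tight_const_le_of_lt_dim hk hh hg)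

lemma sum_norm_sq_eq_of_frameOp_eq {g : Fin r → EuclideanSpace ℂ (Fin n)}
    {h : Fin k → EuclideanSpace ℂ (Fin n)} (hgh : frameOp g = frameOp h) :
    ∑ i, ‖g i‖ ^ 2 = ∑ i, ‖h i‖ ^ 2 := by
  have := trace_frameOp g
  rw [hgh, trace_frameOp h] at this
  exact_mod_cast this.symm

lemma Completable.sum_range_eq {a : ℕ → ℝ} (hr : r < n) (hk : k < n)
    (hfr : Completable f a r) (hfk : Completable f a k) :
    ∑ i ∈ Finset.range r, a i = ∑ i ∈ Finset.range k, a i := by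
  obtain ⟨c, g, -, hga, hg⟩ := hfr
  obtain ⟨c', h, -, hha, hh⟩ := hfk
  obtain rfl := tight_const_eq_of_lt_dim hr hk hg hh
  have hgh : frameOp g = frameOp h := add_left_cancel (hg.trans hh.symm)
  have := sum_norm_sq_eq_of_frameOp_eq hgh
  simpa only [hga, hha, Fin.sum_univ_eq_sum_range (fun i => a i)] using this

end TightCompletion

lemma strictMono_sum_range_of_pos {M : Type*} [AddCommMonoid M] [PartialOrder M]
    [IsOrderedCancelAddMonoid M] {a : ℕ → M} (hapos : ∀ i, 0 < a i) :
    StrictMono fun k => ∑ i ∈ Finset.range k, a i :=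
  strictMono_nat_of_lt_succ fun k => by
    simpa only [Finset.sum_range_succ] using lt_add_of_pos_right _ (hapos k)

theorem tight_completion_lt_dim_unique_general {n p : ℕ}
    (f : Fin p → EuclideanSpace ℂ (Fin n))
    (a : ℕ → ℝ) (hapos : ∀ i, 0 < a i)
    (r : ℕ) (hr : r < n) (hcomp : Completable f a r) :
    ∀ k, k < n → k ≠ r → ¬ Completable f a k := by
  intro k hk hkr hfk
  exact hkr ((strictMono_sum_range_of_pos hapos).injective (hfk.sum_range_eq hk hr hcomp))

theorem tight_completion_lt_dim_unique {n p : ℕ} (hn : 0 < n)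
    (f : Fin p → EuclideanSpace ℂ (Fin n))
    (a : ℕ → ℝ) (ha : Antitone a) (hapos : ∀ i, 0 < a i)
    (r : ℕ) (hr : r < n) (hcomp : Completable f a r) :
    ∀ k, k < n → k ≠ r → ¬ Completable f a k :=
  tight_completion_lt_dim_unique_general f a hapos r hr hcomp
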